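/- Let Γ be the type D̃_n affine Coxeter graph (n ≥ 5): a path on n-3 vertices with two extra leaves attached at each end (total n+1 vertices). Then the total number of independent sets of Γ equals d_n + 2·d_{n-2}, where d_1 = 1, d_2 = 4, and d_m = d_{m-1} + d_{m-2} for m ≥ 3. -/
import Mathlib

/-- The affine `D̃ₙ` Coxeter graph (for `n ≥ 5`) on `n + 1` vertices `0, 1, …, n`:
the vertices `0` and `1` (namely `s₀` and `s₀'`) are both adjacent to the vertex `2`
(namely `s₁`), the vertices `2, …, n-2` form a path (namely `s₁ — ⋯ — s_{n-3}`), and the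
vertices `n-1` and `n` (namely `s_{n-2}` and `s_{n-2}'`) are both adjacent to the vertex
`n-2` (namely `s_{n-3}`). -/
def affineDGraph (n : ℕ) : SimpleGraph (Fin (n + 1)) :=
  SimpleGraph.fromRel (fun i j =>
    (i.val = 0 ∧ j.val = 2) ∨ (i.val = 1 ∧ j.val = 2) ∨
    (2 ≤ i.val ∧ i.val + 1 = j.val ∧ j.val ≤ n - 2) ∨
    (i.val = n - 2 ∧ (j.val = n - 1 ∨ j.val = n)))

/-- The sequence `d` with `d₁ = 1`, `d₂ = 4` and `dₘ = d_{m-1} + d_{m-2}` (so `d₀ = 3`). -/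
def dseq : ℕ → ℕ
  | 0 => 3
  | 1 => 1
  | m + 2 => dseq (m + 1) + dseq m

namespace AffineDAux

lemma dseq_add2 (a : ℕ) : dseq (a + 2) = dseq (a + 1) + dseq a := rfl

/-- edge relation (on values) of the "fork + path" graph -/
def fpRel (i j : ℕ) : Prop := (i = 0 ∧ j = 2) ∨ (i = 1 ∧ j = 2) ∨ (2 ≤ i ∧ i + 1 = j)

instance (i j : ℕ) : Decidable (fpRel i j) := by unfold fpRel; infer_instance

/-- boolean-function form of independent sets of the fork + path of `k+1` vertices -/
def FP (k : ℕ) (q : Fin (k + 3) → Bool) : Prop :=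
  ∀ i j : Fin (k + 3), fpRel i.val j.val → ¬(q i = true ∧ q j = true)

instance (k : ℕ) : DecidablePred (FP k) := fun q => by unfold FP; infer_instance

noncomputable def g (k : ℕ) : ℕ := Nat.card {q : Fin (k + 3) → Bool // FP k q}

noncomputable def gB (k : ℕ) : ℕ :=
  Nat.card {q : Fin (k + 3) → Bool // FP k q ∧ q (Fin.last (k + 2)) = false}

/-- generic snoc-decomposition of a counting problem -/
lemma card_snoc (k : ℕ) (P : (Fin (k + 1) → Bool) → Prop) :
    Nat.card {p : Fin (k + 1) → Bool // P p} =
      Nat.card {x : (Fin k → Bool) × Bool // P (Fin.snoc x.1 x.2)} :=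
  Nat.card_congr
    { toFun := fun p => ⟨(Fin.init p.1, p.1 (Fin.last k)), by
        rw [Fin.snoc_init_self]; exact p.2⟩
      invFun := fun x => ⟨Fin.snoc x.1.1 x.1.2, x.2⟩
      left_inv := fun p => Subtype.ext (Fin.snoc_init_self p.1)
      right_inv := fun x => by
        refine Subtype.ext (Prod.ext ?_ ?_) <;> simp [Fin.init_snoc, Fin.snoc_last] }

/-- generic split of a product-with-Bool counting problem -/
lemma card_prod_bool {A : Type*} [Finite A] (Q : A × Bool → Prop) :
    Nat.card {x : A × Bool // Q x} =
      Nat.card {a : A // Q (a, false)} + Nat.card {a : A // Q (a, true)} := by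
  rw [← Nat.card_sum]
  exact Nat.card_congr
    { toFun := fun x => match x with
        | ⟨(a, false), h⟩ => Sum.inl ⟨a, h⟩
        | ⟨(a, true), h⟩ => Sum.inr ⟨a, h⟩
      invFun := fun x => match x with
        | Sum.inl ⟨a, h⟩ => ⟨(a, false), h⟩
        | Sum.inr ⟨a, h⟩ => ⟨(a, true), h⟩
      left_inv := by rintro ⟨⟨a, _ | _⟩, h⟩ <;> rfl
      right_inv := by rintro (⟨a, h⟩ | ⟨a, h⟩) <;> rfl }

lemma card_empty_pred {A : Type*} (Q : A → Prop) (h : ∀ a, ¬ Q a) :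
    Nat.card {a : A // Q a} = 0 := by
  have : IsEmpty {a : A // Q a} := ⟨fun x => h x.1 x.2⟩
  simp

lemma FP_snoc (k : ℕ) (q : Fin (k + 3) → Bool) (b : Bool) :
    FP (k + 1) (Fin.snoc q b) ↔
      FP k q ∧ (b = true → q (Fin.last (k + 2)) = false) := by
  constructor
  · intro h
    refine ⟨fun i j hr hq => ?_, fun hb => ?_⟩
    · refine h i.castSucc j.castSucc ?_ ?_
      · show fpRel i.val j.val; exact hr
      · rw [Fin.snoc_castSucc, Fin.snoc_castSucc]; exact hq
    · by_contra hq
      rw [Bool.not_eq_false] at hq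
      refine h ((Fin.last (k + 2)).castSucc) (Fin.last (k + 3)) ?_ ?_
      · show fpRel (k + 2) (k + 3)
        unfold fpRel; omega
      · rw [Fin.snoc_castSucc, Fin.snoc_last]; exact ⟨hq, hb⟩
  · rintro ⟨h1, h2⟩ i j hr ⟨hi, hj⟩
    by_cases hjl : j.val = k + 3
    · have hj' : j = Fin.last (k + 3) := Fin.ext hjl
      have hi' : i.val = k + 2 := by
        rcases hr with ⟨h, h'⟩ | ⟨h, h'⟩ | ⟨h, h'⟩ <;> omega
      have hieq : i = (Fin.last (k + 2)).castSucc := Fin.ext hi'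
      rw [hieq, Fin.snoc_castSucc] at hi
      rw [hj', Fin.snoc_last] at hj
      exact absurd (h2 hj) (by simp [hi])
    · have hij : i.val < j.val := by
        rcases hr with ⟨h, h'⟩ | ⟨h, h'⟩ | ⟨h, h'⟩ <;> omega
      have hjlt : j.val < k + 3 := by omega
      have hilt : i.val < k + 3 := by omega
      refine h1 ⟨i.val, hilt⟩ ⟨j.val, hjlt⟩ hr ?_
      have hie : i = Fin.castSucc ⟨i.val, hilt⟩ := Fin.ext rfl
      have hje : j = Fin.castSucc ⟨j.val, hjlt⟩ := Fin.ext rfl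
      rw [hie, Fin.snoc_castSucc] at hi
      rw [hje, Fin.snoc_castSucc] at hj
      exact ⟨hi, hj⟩

lemma g_succ (k : ℕ) : g (k + 1) = g k + gB k := by
  rw [g, card_snoc (k + 3) (FP (k + 1)),
    Nat.card_congr (Equiv.subtypeEquivRight
      (fun x : (Fin (k + 3) → Bool) × Bool => FP_snoc k x.1 x.2)),
    card_prod_bool]
  congr 1
  · exact Nat.card_congr (Equiv.subtypeEquivRight
      (fun q : Fin (k + 3) → Bool => by simp))
  · exact Nat.card_congr (Equiv.subtypeEquivRight
      (fun q : Fin (k + 3) → Bool => by simp))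

lemma gB_succ (k : ℕ) : gB (k + 1) = g k := by
  rw [gB, card_snoc (k + 3) (fun p => FP (k + 1) p ∧ p (Fin.last (k + 3)) = false)]
  have he : ∀ x : (Fin (k + 3) → Bool) × Bool,
      (FP (k + 1) (Fin.snoc x.1 x.2) ∧
        (Fin.snoc x.1 x.2 : Fin (k + 4) → Bool) (Fin.last (k + 3)) = false)
        ↔ ((FP k x.1 ∧ (x.2 = true → x.1 (Fin.last (k + 2)) = false)) ∧ x.2 = false) := by
    rintro ⟨q, b⟩
    rw [FP_snoc]
    simp only [Fin.snoc_last]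
  rw [Nat.card_congr (Equiv.subtypeEquivRight he), card_prod_bool]
  have h0 : Nat.card {a : Fin (k + 3) → Bool //
      (FP k a ∧ ((true : Bool) = true → a (Fin.last (k + 2)) = false)) ∧ (true : Bool) = false} = 0 :=
    card_empty_pred _ (by simp)
  rw [h0, Nat.add_zero]
  exact Nat.card_congr (Equiv.subtypeEquivRight
    (fun q : Fin (k + 3) → Bool => by simp))

lemma g_zero : g 0 = 5 := by
  rw [g, Nat.card_eq_fintype_card]; decide

lemma gB_zero : gB 0 = 4 := by
  rw [gB, Nat.card_eq_fintype_card]; decide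

lemma g_dseq : ∀ k, g k = dseq (k + 3) ∧ gB k = dseq (k + 2)
  | 0 => ⟨by rw [g_zero]; decide, by rw [gB_zero]; decide⟩
  | k + 1 => by
    obtain ⟨h1, h2⟩ := g_dseq k
    refine ⟨?_, ?_⟩
    · rw [g_succ, h1, h2]
      exact (dseq_add2 (k + 2)).symm
    · rw [gB_succ, h1]

/-- relation for the full graph, with `n = m + 5` normalized -/
def bigRel (m i j : ℕ) : Prop :=
  (i = 0 ∧ j = 2) ∨ (i = 1 ∧ j = 2) ∨ (2 ≤ i ∧ i + 1 = j ∧ j ≤ m + 3) ∨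
    (i = m + 3 ∧ (j = m + 4 ∨ j = m + 5))

def Big (m : ℕ) (p : Fin (m + 6) → Bool) : Prop :=
  ∀ i j : Fin (m + 6), bigRel m i.val j.val → ¬(p i = true ∧ p j = true)

/-- middle relation after stripping the very last leaf -/
def midRel (m i j : ℕ) : Prop :=
  (i = 0 ∧ j = 2) ∨ (i = 1 ∧ j = 2) ∨ (2 ≤ i ∧ i + 1 = j ∧ j ≤ m + 3) ∨
    (i = m + 3 ∧ j = m + 4)

def Mid (m : ℕ) (q : Fin (m + 5) → Bool) : Prop :=
  ∀ i j : Fin (m + 5), midRel m i.val j.val → ¬(q i = true ∧ q j = true)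

lemma Big_snoc (m : ℕ) (q : Fin (m + 5) → Bool) (b : Bool) :
    Big m (Fin.snoc q b) ↔
      Mid m q ∧ (b = true → q ((Fin.last (m + 3)).castSucc) = false) := by
  constructor
  · intro h
    refine ⟨fun i j hr hq => ?_, fun hb => ?_⟩
    · refine h i.castSucc j.castSucc ?_ ?_
      · show bigRel m i.val j.val
        unfold midRel at hr; unfold bigRel; tauto
      · rw [Fin.snoc_castSucc, Fin.snoc_castSucc]; exact hq
    · by_contra hq
      rw [Bool.not_eq_false] at hq
      refine h ((Fin.last (m + 3)).castSucc.castSucc) (Fin.last (m + 5)) ?_ ?_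
      · show bigRel m (m + 3) (m + 5)
        unfold bigRel; omega
      · rw [Fin.snoc_castSucc, Fin.snoc_last]; exact ⟨hq, hb⟩
  · rintro ⟨h1, h2⟩ i j hr ⟨hi, hj⟩
    by_cases hjl : j.val = m + 5
    · have hj' : j = Fin.last (m + 5) := Fin.ext hjl
      have hi' : i.val = m + 3 := by
        rcases hr with ⟨h, h'⟩ | ⟨h, h'⟩ | ⟨h, h', h''⟩ | ⟨h, h' | h'⟩ <;> omega
      have hieq : i = (Fin.last (m + 3)).castSucc.castSucc := Fin.ext hi'
      rw [hieq, Fin.snoc_castSucc] at hi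
      rw [hj', Fin.snoc_last] at hj
      exact absurd (h2 hj) (by simp [hi])
    · have hij : i.val < j.val := by
        rcases hr with ⟨h, h'⟩ | ⟨h, h'⟩ | ⟨h, h', h''⟩ | ⟨h, h' | h'⟩ <;> omega
      have hjlt : j.val < m + 5 := by omega
      have hilt : i.val < m + 5 := by omega
      refine h1 ⟨i.val, hilt⟩ ⟨j.val, hjlt⟩ ?_ ?_
      · show midRel m i.val j.val
        unfold bigRel at hr; unfold midRel
        rcases hr with h | h | h | ⟨h, h' | h'⟩
        · tauto
        · tauto
        · tauto
        · right; right; right; exact ⟨h, h'⟩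
        · omega
      · have hie : i = Fin.castSucc ⟨i.val, hilt⟩ := Fin.ext rfl
        have hje : j = Fin.castSucc ⟨j.val, hjlt⟩ := Fin.ext rfl
        rw [hie, Fin.snoc_castSucc] at hi
        rw [hje, Fin.snoc_castSucc] at hj
        exact ⟨hi, hj⟩

lemma Mid_snoc (m : ℕ) (r : Fin (m + 4) → Bool) (b : Bool) :
    Mid m (Fin.snoc r b) ↔
      FP (m + 1) r ∧ (b = true → r (Fin.last (m + 3)) = false) := by
  constructor
  · intro h
    refine ⟨fun i j hr hq => ?_, fun hb => ?_⟩
    · refine h i.castSucc j.castSucc ?_ ?_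
      · show midRel m i.val j.val
        unfold fpRel at hr; unfold midRel
        have hjlt : j.val < m + 4 := j.isLt
        rcases hr with h' | h' | h'
        · tauto
        · tauto
        · right; right; left; exact ⟨h'.1, h'.2, by omega⟩
      · rw [Fin.snoc_castSucc, Fin.snoc_castSucc]; exact hq
    · by_contra hq
      rw [Bool.not_eq_false] at hq
      refine h ((Fin.last (m + 3)).castSucc) (Fin.last (m + 4)) ?_ ?_
      · show midRel m (m + 3) (m + 4)
        unfold midRel; omega
      · rw [Fin.snoc_castSucc, Fin.snoc_last]; exact ⟨hq, hb⟩
  · rintro ⟨h1, h2⟩ i j hr ⟨hi, hj⟩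
    by_cases hjl : j.val = m + 4
    · have hj' : j = Fin.last (m + 4) := Fin.ext hjl
      have hi' : i.val = m + 3 := by
        rcases hr with ⟨h, h'⟩ | ⟨h, h'⟩ | ⟨h, h', h''⟩ | ⟨h, h'⟩ <;> omega
      have hieq : i = (Fin.last (m + 3)).castSucc := Fin.ext hi'
      rw [hieq, Fin.snoc_castSucc] at hi
      rw [hj', Fin.snoc_last] at hj
      exact absurd (h2 hj) (by simp [hi])
    · have hij : i.val < j.val := by
        rcases hr with ⟨h, h'⟩ | ⟨h, h'⟩ | ⟨h, h', h''⟩ | ⟨h, h'⟩ <;> omega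
      have hjlt : j.val < m + 4 := by omega
      have hilt : i.val < m + 4 := by omega
      refine h1 ⟨i.val, hilt⟩ ⟨j.val, hjlt⟩ ?_ ?_
      · show fpRel i.val j.val
        unfold midRel at hr; unfold fpRel
        rcases hr with h | h | ⟨h, h', h''⟩ | ⟨h, h'⟩
        · tauto
        · tauto
        · right; right; exact ⟨h, h'⟩
        · omega
      · have hie : i = Fin.castSucc ⟨i.val, hilt⟩ := Fin.ext rfl
        have hje : j = Fin.castSucc ⟨j.val, hjlt⟩ := Fin.ext rfl
        rw [hie, Fin.snoc_castSucc] at hi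
        rw [hje, Fin.snoc_castSucc] at hj
        exact ⟨hi, hj⟩

lemma card_Mid (m : ℕ) :
    Nat.card {q : Fin (m + 5) → Bool // Mid m q} = g (m + 1) + gB (m + 1) := by
  rw [card_snoc (m + 4) (Mid m),
    Nat.card_congr (Equiv.subtypeEquivRight
      (fun x : (Fin (m + 4) → Bool) × Bool => Mid_snoc m x.1 x.2)),
    card_prod_bool]
  congr 1
  · exact Nat.card_congr (Equiv.subtypeEquivRight
      (fun q : Fin (m + 4) → Bool => by simp))
  · exact Nat.card_congr (Equiv.subtypeEquivRight
      (fun q : Fin (m + 4) → Bool => by simp))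

lemma card_Mid_last (m : ℕ) :
    Nat.card {q : Fin (m + 5) → Bool //
        Mid m q ∧ q ((Fin.last (m + 3)).castSucc) = false} = 2 * gB (m + 1) := by
  rw [card_snoc (m + 4)
      (fun q => Mid m q ∧ q ((Fin.last (m + 3)).castSucc) = false)]
  have he : ∀ x : (Fin (m + 4) → Bool) × Bool,
      (Mid m (Fin.snoc x.1 x.2) ∧
        (Fin.snoc x.1 x.2 : Fin (m + 5) → Bool) ((Fin.last (m + 3)).castSucc) = false)
        ↔ (FP (m + 1) x.1 ∧ x.1 (Fin.last (m + 3)) = false) := by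
    rintro ⟨r, b⟩
    rw [Mid_snoc, Fin.snoc_castSucc]
    constructor
    · rintro ⟨⟨h1, _⟩, h3⟩; exact ⟨h1, h3⟩
    · rintro ⟨h1, h2⟩; exact ⟨⟨h1, fun _ => h2⟩, h2⟩
  rw [Nat.card_congr (Equiv.subtypeEquivRight he), card_prod_bool]
  have hc : Nat.card {r : Fin (m + 4) → Bool //
      FP (m + 1) r ∧ r (Fin.last (m + 3)) = false} = gB (m + 1) := rfl
  rw [hc]
  exact (two_mul _).symm

end AffineDAux

open AffineDAux in
/-- For `n ≥ 5`, the total number of independent sets of the affine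
`D̃ₙ` Coxeter graph equals `dₙ + 2·d_{n-2}`. -/
theorem totalIndepSets_affineDGraph (n : ℕ) (hn : 5 ≤ n) :
    Nat.card {t : Finset (Fin (n + 1)) //
      ∀ i ∈ t, ∀ j ∈ t, ¬ (affineDGraph n).Adj i j} = dseq n + 2 * dseq (n - 2) := by
  obtain ⟨m, rfl⟩ : ∃ m, n = m + 5 := ⟨n - 5, by omega⟩
  -- step 1: pass to boolean functions
  have e1 : {t : Finset (Fin (m + 5 + 1)) //
      ∀ i ∈ t, ∀ j ∈ t, ¬ (affineDGraph (m + 5)).Adj i j} ≃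
      {p : Fin (m + 6) → Bool // ∀ i j : Fin (m + 6),
        p i = true → p j = true → ¬ (affineDGraph (m + 5)).Adj i j} :=
    { toFun := fun t => ⟨fun i => decide (i ∈ t.1), fun i j hi hj =>
        t.2 i (by simpa using hi) j (by simpa using hj)⟩
      invFun := fun p => ⟨Finset.univ.filter (fun i => p.1 i = true), fun i hi j hj =>
        p.2 i j (by simpa using hi) (by simpa using hj)⟩
      left_inv := fun t => Subtype.ext (by ext i; simp)
      right_inv := fun p => Subtype.ext (by funext i; simp) }
  rw [Nat.card_congr e1]
  -- step 2: translate the adjacency into `Big`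
  have hbig : ∀ p : Fin (m + 6) → Bool,
      (∀ i j : Fin (m + 6), p i = true → p j = true → ¬ (affineDGraph (m + 5)).Adj i j)
        ↔ Big m p := by
    intro p
    have hraw : ∀ i j : Fin (m + 6),
        ((i.val = 0 ∧ j.val = 2) ∨ (i.val = 1 ∧ j.val = 2) ∨
          (2 ≤ i.val ∧ i.val + 1 = j.val ∧ j.val ≤ m + 5 - 2) ∨
          (i.val = m + 5 - 2 ∧ (j.val = m + 5 - 1 ∨ j.val = m + 5)))
          ↔ bigRel m i.val j.val := by
      intro i j; unfold bigRel; omega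
    constructor
    · intro h i j hr ⟨hi, hj⟩
      refine h i j hi hj ?_
      rw [affineDGraph, SimpleGraph.fromRel_adj]
      refine ⟨?_, Or.inl ((hraw i j).mpr hr)⟩
      have : i.val ≠ j.val := by unfold bigRel at hr; omega
      exact fun he => this (by rw [he])
    · intro h i j hi hj hadj
      rw [affineDGraph, SimpleGraph.fromRel_adj] at hadj
      obtain ⟨hne, hor | hor⟩ := hadj
      · exact h i j ((hraw i j).mp hor) ⟨hi, hj⟩
      · exact h j i ((hraw j i).mp hor) ⟨hj, hi⟩
  rw [Nat.card_congr (Equiv.subtypeEquivRight hbig)]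
  -- step 3: strip the last leaf
  rw [card_snoc (m + 5) (Big m),
    Nat.card_congr (Equiv.subtypeEquivRight
      (fun x : (Fin (m + 5) → Bool) × Bool => Big_snoc m x.1 x.2)),
    card_prod_bool]
  have hA : Nat.card {q : Fin (m + 5) → Bool //
      Mid m q ∧ ((false : Bool) = true → q ((Fin.last (m + 3)).castSucc) = false)}
      = g (m + 1) + gB (m + 1) := by
    rw [Nat.card_congr (Equiv.subtypeEquivRight
      (q := fun q : Fin (m + 5) → Bool => Mid m q)
      (fun q : Fin (m + 5) → Bool => by simp))]
    exact card_Mid m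
  have hB : Nat.card {q : Fin (m + 5) → Bool //
      Mid m q ∧ ((true : Bool) = true → q ((Fin.last (m + 3)).castSucc) = false)}
      = 2 * gB (m + 1) := by
    rw [Nat.card_congr (Equiv.subtypeEquivRight
      (q := fun q : Fin (m + 5) → Bool =>
        Mid m q ∧ q ((Fin.last (m + 3)).castSucc) = false)
      (fun q : Fin (m + 5) → Bool => by simp))]
    exact card_Mid_last m
  rw [hA, hB]
  obtain ⟨hg, hgB⟩ := g_dseq (m + 1)
  rw [hg, hgB]
  show dseq (m + 4) + dseq (m + 3) + 2 * dseq (m + 3) = dseq (m + 5) + 2 * dseq (m + 3)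
  exact congrArg (· + 2 * dseq (m + 3)) (dseq_add2 (m + 3)).symm
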